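/- Let n, n' and m be nonnegative integers such that n+m and n'+m are both even and n ≥ n'. Then the partisan chocolate game position PC(n,m) is greater than or equal to PC(n',m) in the normal-play game order. -/

import Mathlib

universe u

namespace SetTheory

/-- Pre-games (removed from Mathlib; restored with the old definition). -/
inductive PGame : Type (u + 1)
  | mk : ∀ α β : Type u, (α → PGame) → (β → PGame) → PGame

namespace PGame

/-- The type of Left moves. -/
def LeftMoves : PGame.{u} → Type u
  | mk l _ _ _ => l

/-- The type of Right moves. -/
def RightMoves : PGame.{u} → Type u
  | mk _ r _ _ => r

/-- Left move. -/
def moveLeft : ∀ g : PGame.{u}, LeftMoves g → PGame.{u}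
  | mk _ _ L _ => L

/-- Right move. -/
def moveRight : ∀ g : PGame.{u}, RightMoves g → PGame.{u}
  | mk _ _ _ R => R

mutual
/-- `x ≤ y`: every Left move of `x` is `⧏ y`, and `x ⧏` every Right move of `y`. -/
inductive Le : PGame.{u} → PGame.{u} → Prop
  | intro {x y : PGame.{u}} : (∀ i, LF (x.moveLeft i) y) → (∀ j, LF x (y.moveRight j)) → Le x y
/-- `x ⧏ y`: some Left move of `y` is `≥ x`, or some Right move of `x` is `≤ y`. -/
inductive LF : PGame.{u} → PGame.{u} → Prop
  | left {x y : PGame.{u}} (i : y.LeftMoves) : Le x (y.moveLeft i) → LF x y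
  | right {x y : PGame.{u}} (j : x.RightMoves) : Le (x.moveRight j) y → LF x y
end

instance : LE PGame.{u} := ⟨Le⟩

end PGame

end SetTheory

open SetTheory

/-- The partisan chocolate game position `PC n m`.
Left options: `PC n' m` with `n' < n` and `n' + m` even, and `PC n m'` with `m' < m` and
`n + m'` even. Right options: the same with "odd" in place of "even". -/
def PC : ℕ → ℕ → SetTheory.PGame
  | n, m =>
    SetTheory.PGame.mk
      {p : ℕ × ℕ // (p.2 = m ∧ p.1 < n ∧ Even (p.1 + m)) ∨ (p.1 = n ∧ p.2 < m ∧ Even (n + p.2))}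
      {p : ℕ × ℕ // (p.2 = m ∧ p.1 < n ∧ Odd (p.1 + m)) ∨ (p.1 = n ∧ p.2 < m ∧ Odd (n + p.2))}
      (fun p => PC p.1.1 p.1.2)
      (fun p => PC p.1.1 p.1.2)
termination_by n m => n + m
decreasing_by
  all_goals rcases p.2 with ⟨h1, h2, -⟩ | ⟨h1, h2, -⟩ <;> omega

/-!
Among positions with `p + q` even, `PC p q` increases with `p / 2 + q / 2`; among those with
`p + q` odd it decreases with `p / 2 + q / 2`; and every even position lies below every odd one
(`PC (2k) 0` increases and `PC (2k+1) 0` decreases to `2/3`). These three comparisons are proved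
together by induction on `p + q + s + t`: each witness of `⧏` is a move by one or two squares,
and the three cases feed each other's induction steps.
-/

open SetTheory.PGame

infix:50 " ⧏ " => SetTheory.PGame.LF

def IsPCMove (s t a b : ℕ) : Prop := b = t ∧ a < s ∨ a = s ∧ b < t

namespace IsPCMove

variable {s t a b : ℕ}

lemma and_iff (P : ℕ → Prop) :
    (b = t ∧ a < s ∧ P (a + t)) ∨ (a = s ∧ b < t ∧ P (s + b)) ↔
      IsPCMove s t a b ∧ P (a + b) := by
  constructor
  · rintro (⟨rfl, hlt, hP⟩ | ⟨rfl, hlt, hP⟩)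
    exacts [⟨Or.inl ⟨rfl, hlt⟩, hP⟩, ⟨Or.inr ⟨rfl, hlt⟩, hP⟩]
  · rintro ⟨⟨rfl, hlt⟩ | ⟨rfl, hlt⟩, hP⟩
    exacts [Or.inl ⟨rfl, hlt, hP⟩, Or.inr ⟨rfl, hlt, hP⟩]

lemma add_lt (h : IsPCMove s t a b) : a + b < s + t := by
  unfold IsPCMove at h; omega

lemma halves_lt (h : IsPCMove s t a b) (hpar : (a + b) % 2 = (s + t) % 2) :
    a / 2 + b / 2 < s / 2 + t / 2 := by
  unfold IsPCMove at h; omega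

end IsPCMove

lemma lf_PC_of_le_of_isPCMove {x : PGame} {s t a b : ℕ} (hmove : IsPCMove s t a b)
    (heven : (a + b) % 2 = 0) (h : x ≤ PC a b) : x ⧏ PC s t := by
  rw [PC.eq_1 s t]
  exact LF.left ⟨(a, b), (IsPCMove.and_iff Even).2 ⟨hmove, Nat.even_iff.2 heven⟩⟩ h

lemma PC_lf_of_le_of_isPCMove {x : PGame} {p q a b : ℕ} (hmove : IsPCMove p q a b)
    (hodd : (a + b) % 2 = 1) (h : PC a b ≤ x) : PC p q ⧏ x := by
  rw [PC.eq_1 p q]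
  exact LF.right ⟨(a, b), (IsPCMove.and_iff Odd).2 ⟨hmove, Nat.odd_iff.2 hodd⟩⟩ h

lemma PC_le_PC_of_forall {p q s t : ℕ}
    (hleft : ∀ a b, IsPCMove p q a b → (a + b) % 2 = 0 → PC a b ⧏ PC s t)
    (hright : ∀ a b, IsPCMove s t a b → (a + b) % 2 = 1 → PC p q ⧏ PC a b) :
    PC p q ≤ PC s t := by
  refine Le.intro ?_ ?_
  · rw [PC.eq_1 p q]
    rintro ⟨⟨a, b⟩, hab⟩
    obtain ⟨hmove, heven⟩ := (IsPCMove.and_iff Even).1 hab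
    exact hleft a b hmove (Nat.even_iff.1 heven)
  · rw [PC.eq_1 s t]
    rintro ⟨⟨a, b⟩, hab⟩
    obtain ⟨hmove, hodd⟩ := (IsPCMove.and_iff Odd).1 hab
    exact hright a b hmove (Nat.odd_iff.1 hodd)

def PCLe (p q s t : ℕ) : Prop :=
  (p + q) % 2 = 0 ∧ (s + t) % 2 = 0 ∧ p / 2 + q / 2 ≤ s / 2 + t / 2 ∨
  (p + q) % 2 = 1 ∧ (s + t) % 2 = 1 ∧ s / 2 + t / 2 ≤ p / 2 + q / 2 ∨
  (p + q) % 2 = 0 ∧ (s + t) % 2 = 1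

def PCLeBelow (n : ℕ) : Prop :=
  ∀ p q s t, p + q + s + t < n → PCLe p q s t → PC p q ≤ PC s t

lemma PCLeBelow.mono {m n : ℕ} (hmn : m ≤ n) (h : PCLeBelow n) : PCLeBelow m :=
  fun p q s t hlt => h p q s t (by omega)

section Induction

variable {p q s t : ℕ}

lemma PC_lf_PC_of_even_of_odd (ih : PCLeBelow (p + q + s + t)) (hpq : (p + q) % 2 = 0)
    (hst : (s + t) % 2 = 1) : PC p q ⧏ PC s t := by
  rcases le_or_gt (p / 2 + q / 2) (s / 2 + t / 2) with hle | hgt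
  · obtain ⟨a, b, hmove, heven, hhalves⟩ : ∃ a b, IsPCMove s t a b ∧ (a + b) % 2 = 0 ∧
        a / 2 + b / 2 = s / 2 + t / 2 := by
      by_cases hs : s % 2 = 1
      · exact ⟨s - 1, t, Or.inl ⟨rfl, by omega⟩, by omega, by omega⟩
      · exact ⟨s, t - 1, Or.inr ⟨rfl, by omega⟩, by omega, by omega⟩
    have hlt := hmove.add_lt
    exact lf_PC_of_le_of_isPCMove hmove heven
      (ih p q a b (by omega) (Or.inl ⟨hpq, heven, by omega⟩))
  · obtain ⟨a, b, hmove, hodd, hhalves⟩ : ∃ a b, IsPCMove p q a b ∧ (a + b) % 2 = 1 ∧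
        p / 2 + q / 2 ≤ a / 2 + b / 2 + 1 := by
      by_cases hp : 0 < p
      · exact ⟨p - 1, q, Or.inl ⟨rfl, by omega⟩, by omega, by omega⟩
      · exact ⟨p, q - 1, Or.inr ⟨rfl, by omega⟩, by omega, by omega⟩
    have hlt := hmove.add_lt
    exact PC_lf_of_le_of_isPCMove hmove hodd
      (ih a b s t (by omega) (Or.inr (Or.inl ⟨hodd, hst, by omega⟩)))

lemma PC_lf_PC_of_even_of_lt (ih : PCLeBelow (p + q + s + t)) (hpq : (p + q) % 2 = 0)
    (hst : (s + t) % 2 = 0) (hhalves : p / 2 + q / 2 < s / 2 + t / 2) : PC p q ⧏ PC s t := by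
  obtain ⟨a, b, hmove, heven, hab⟩ : ∃ a b, IsPCMove s t a b ∧ (a + b) % 2 = 0 ∧
      a / 2 + b / 2 + 1 = s / 2 + t / 2 := by
    by_cases hs : 2 ≤ s
    · exact ⟨s - 2, t, Or.inl ⟨rfl, by omega⟩, by omega, by omega⟩
    · exact ⟨s, t - 2, Or.inr ⟨rfl, by omega⟩, by omega, by omega⟩
  have hlt := hmove.add_lt
  exact lf_PC_of_le_of_isPCMove hmove heven
    (ih p q a b (by omega) (Or.inl ⟨hpq, heven, by omega⟩))

lemma PC_lf_PC_of_odd_of_lt (ih : PCLeBelow (p + q + s + t)) (hpq : (p + q) % 2 = 1)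
    (hst : (s + t) % 2 = 1) (hhalves : s / 2 + t / 2 < p / 2 + q / 2) : PC p q ⧏ PC s t := by
  obtain ⟨a, b, hmove, hodd, hab⟩ : ∃ a b, IsPCMove p q a b ∧ (a + b) % 2 = 1 ∧
      a / 2 + b / 2 + 1 = p / 2 + q / 2 := by
    by_cases hp : 2 ≤ p
    · exact ⟨p - 2, q, Or.inl ⟨rfl, by omega⟩, by omega, by omega⟩
    · exact ⟨p, q - 2, Or.inr ⟨rfl, by omega⟩, by omega, by omega⟩
  have hlt := hmove.add_lt
  exact PC_lf_of_le_of_isPCMove hmove hodd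
    (ih a b s t (by omega) (Or.inr (Or.inl ⟨hodd, hst, by omega⟩)))

end Induction

lemma pcLeBelow (n : ℕ) : PCLeBelow n := by
  induction n using Nat.strong_induction_on with
  | _ n ih =>
  intro p q s t hn hle
  have ih := ih _ hn
  apply PC_le_PC_of_forall
  · intro a b hmove heven
    have hlt := hmove.add_lt
    have ih := ih.mono (n := p + q + s + t) (m := a + b + s + t) (by omega)
    rcases hle with ⟨hpq, hst, hhalves⟩ | ⟨-, hst, -⟩ | ⟨-, hst⟩
    · have hdrop := hmove.halves_lt (by omega)
      exact PC_lf_PC_of_even_of_lt ih heven hst (by omega)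
    all_goals exact PC_lf_PC_of_even_of_odd ih heven hst
  · intro a b hmove hodd
    have hlt := hmove.add_lt
    have ih := ih.mono (n := p + q + s + t) (m := p + q + a + b) (by omega)
    rcases hle with ⟨hpq, -, -⟩ | ⟨hpq, hst, hhalves⟩ | ⟨hpq, -⟩
    · exact PC_lf_PC_of_even_of_odd ih hpq hodd
    · have hdrop := hmove.halves_lt (by omega)
      exact PC_lf_PC_of_odd_of_lt ih hpq hodd (by omega)
    · exact PC_lf_PC_of_even_of_odd ih hpq hodd

theorem PC_le_PC {p q s t : ℕ} (h : PCLe p q s t) : PC p q ≤ PC s t :=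
  pcLeBelow (p + q + s + t + 1) p q s t (by omega) h

theorem stmt_1 (n n' m : ℕ) (hn : Even (n + m)) (hn' : Even (n' + m)) (h : n' ≤ n) :
    PC n' m ≤ PC n m :=
  PC_le_PC (Or.inl ⟨Nat.even_iff.1 hn', Nat.even_iff.1 hn, by omega⟩)
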